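/- Let q, λ ∈ ℂ with |q| < 1, 0 < |λ| < 1 and 1 + λ² ≠ 0, and let μ ∈ ℂ with μ² = q. Assume ψ(λ,q) ≠ 0 and (1+λ²) ψ(λ,q) ≠ λ²(1−q) ψ(λ,q²). Then 1 / (1 − λ²(1−q) ψ(λ,q²) / ((1+λ²) ψ(λ,q))) = (1+λ²) Σ_{k=0}^∞ (−iλμ)^k/(1 − iλμ q^k), the series on the right converging absolutely (its value independent of the choice of μ). -/

import Mathlib

/-!
Put `a = iλμ`, so that `a² = -λ²q` and `ψ(λ, x) = ₂φ₁(a, -a; -a²; q, x)`. Heine's transformation,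
written with the series `₁φ₀(a; —; q, w)` in place of infinite products, gives
`ψ(λ, q) · ₁φ₀(a; —; q, -a) = (1 - a) ₁φ₀(a; —; q, q) · Σₘ tₘ` with `tₘ = (-a)ᵐ / (1 - a qᵐ)`, and
the same for `ψ(λ, q²)` with `tₘ` replaced by `tₘ (1 - q^{m+1}) / (1 - a q^{m+1})`. Because
`λ² q = -a²`, the combination `(1 + λ²) tₘ - λ²(1 - q) tₘ (1 - q^{m+1}) / (1 - a q^{m+1})` equals
`(1 - a)(tₘ - tₘ₊₁)` and telescopes. Finally `₁φ₀(a; —; q, -a) ≠ 0`: a zero would propagate to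
every `-a qⁿ`, where the series tends to `1`. Hence
`(1 + λ²) ψ(λ, q) - λ²(1 - q) ψ(λ, q²) = ψ(λ, q) / Σₘ tₘ`, which is the claim.
-/

open Complex

/-- The `q`-Pochhammer symbol `(a;q)_k = ∏_{j=0}^{k-1} (1 - a q^j)`. -/
noncomputable def qPoch (a q : ℂ) (k : ℕ) : ℂ := ∏ j ∈ Finset.range k, (1 - a * q ^ j)

/-- `ψ(λ,x) = Σ_k (-λ²q;q²)_k x^k / ((q;q)_k (λ²q;q)_k) = ₂φ₁(iλ√q, -iλ√q; λ²q; q, x)`. -/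
noncomputable def psi (q lam x : ℂ) : ℂ :=
  ∑' k : ℕ, qPoch (-(lam ^ 2 * q)) (q ^ 2) k * x ^ k / (qPoch q q k * qPoch (lam ^ 2 * q) q k)

open Filter Topology

@[simp]
lemma qPoch_zero (a q : ℂ) : qPoch a q 0 = 1 := by simp [qPoch]

lemma qPoch_succ (a q : ℂ) (k : ℕ) : qPoch a q (k + 1) = qPoch a q k * (1 - a * q ^ k) :=
  Finset.prod_range_succ _ _

lemma qPoch_succ' (a q : ℂ) (k : ℕ) : qPoch a q (k + 1) = (1 - a) * qPoch (a * q) q k := by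
  simp only [qPoch, Finset.prod_range_succ', pow_zero, mul_one, mul_assoc, ← pow_succ']
  ring

lemma qPoch_sq_sq (a q : ℂ) (k : ℕ) :
    qPoch (a ^ 2) (q ^ 2) k = qPoch a q k * qPoch (-a) q k := by
  simp only [qPoch, ← Finset.prod_mul_distrib]
  exact Finset.prod_congr rfl fun j _ => by ring

section Bounds

variable {a q : ℂ}

lemma norm_mul_pow_le (a : ℂ) (hq : ‖q‖ ≤ 1) (j : ℕ) : ‖a * q ^ j‖ ≤ ‖a‖ := by
  rw [norm_mul, norm_pow]
  exact mul_le_of_le_one_right (norm_nonneg a) (pow_le_one₀ (norm_nonneg q) hq)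

lemma one_sub_mul_pow_ne_zero (hq : ‖q‖ ≤ 1) (ha : ‖a‖ < 1) (j : ℕ) : 1 - a * q ^ j ≠ 0 := by
  refine sub_ne_zero.2 fun h => ?_
  have := norm_mul_pow_le a hq j
  rw [← h, norm_one] at this
  linarith

lemma qPoch_ne_zero (hq : ‖q‖ ≤ 1) (ha : ‖a‖ < 1) (k : ℕ) : qPoch a q k ≠ 0 :=
  Finset.prod_ne_zero_iff.2 fun j _ => one_sub_mul_pow_ne_zero hq ha j

lemma sum_range_norm_mul_pow_le (a : ℂ) (hq : ‖q‖ < 1) (k : ℕ) :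
    ∑ j ∈ Finset.range k, ‖a‖ * ‖q‖ ^ j ≤ ‖a‖ / (1 - ‖q‖) := by
  rw [← Finset.mul_sum, div_eq_mul_inv, ← tsum_geometric_of_lt_one (norm_nonneg q) hq]
  gcongr
  exact (summable_geometric_of_lt_one (norm_nonneg q) hq).sum_le_tsum _ fun j _ => by positivity

lemma norm_qPoch_le (a : ℂ) (hq : ‖q‖ < 1) (k : ℕ) :
    ‖qPoch a q k‖ ≤ Real.exp (‖a‖ / (1 - ‖q‖)) := calc
  ‖qPoch a q k‖ ≤ ∏ j ∈ Finset.range k, Real.exp (‖a‖ * ‖q‖ ^ j) := by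
    rw [qPoch, norm_prod]
    refine Finset.prod_le_prod (fun j _ => norm_nonneg _) fun j _ => ?_
    calc ‖1 - a * q ^ j‖ ≤ 1 + ‖a‖ * ‖q‖ ^ j := by
          simpa [norm_mul, norm_pow] using norm_sub_le (1 : ℂ) (a * q ^ j)
      _ ≤ _ := by linarith [Real.add_one_le_exp (‖a‖ * ‖q‖ ^ j)]
  _ ≤ Real.exp (‖a‖ / (1 - ‖q‖)) := by
    rw [← Real.exp_sum]
    exact Real.exp_le_exp.2 (sum_range_norm_mul_pow_le a hq k)

-- `exp y ≥ 1 + y` at `y = x / (1 - r)`, and `(1 + x / (1 - r)) (1 - x) ≥ 1` for `x ≤ r`.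
lemma Real.exp_neg_div_le_one_sub {x r : ℝ} (hx : 0 ≤ x) (hxr : x ≤ r) (hr : r < 1) :
    Real.exp (-(x / (1 - r))) ≤ 1 - x := by
  have hr' : 0 < 1 - r := by linarith
  have hexp := Real.add_one_le_exp (x / (1 - r))
  rw [Real.exp_neg, inv_le_iff_one_le_mul₀ (Real.exp_pos _)]
  calc (1 : ℝ) ≤ (1 - x) * (x / (1 - r) + 1) := by
        rw [div_add_one hr'.ne', mul_div_assoc', le_div_iff₀ hr']
        nlinarith
    _ ≤ (1 - x) * Real.exp (x / (1 - r)) := by gcongr; linarith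

lemma exp_neg_le_norm_qPoch (hq : ‖q‖ < 1) (ha : ‖a‖ < 1) (k : ℕ) :
    Real.exp (-(‖a‖ / (1 - ‖q‖) / (1 - ‖a‖))) ≤ ‖qPoch a q k‖ := calc
  Real.exp (-(‖a‖ / (1 - ‖q‖) / (1 - ‖a‖)))
      ≤ Real.exp (-((∑ j ∈ Finset.range k, ‖a‖ * ‖q‖ ^ j) / (1 - ‖a‖))) := by
    gcongr
    exact sum_range_norm_mul_pow_le a hq k
  _ = ∏ j ∈ Finset.range k, Real.exp (-(‖a‖ * ‖q‖ ^ j / (1 - ‖a‖))) := by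
    rw [← Real.exp_sum, Finset.sum_div, Finset.sum_neg_distrib]
  _ ≤ ‖qPoch a q k‖ := by
    rw [qPoch, norm_prod]
    refine Finset.prod_le_prod (fun j _ => (Real.exp_pos _).le) fun j _ => ?_
    have hj := norm_mul_pow_le a hq.le j
    rw [norm_mul, norm_pow] at hj
    refine (Real.exp_neg_div_le_one_sub (by positivity) hj ha).trans ?_
    simpa [norm_mul, norm_pow] using norm_sub_norm_le (1 : ℂ) (a * q ^ j)

end Bounds

/-- The series `₁φ₀(a; —; q, w)`, which the `q`-binomial theorem evaluates as
`(a w; q)_∞ / (w; q)_∞`. -/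
noncomputable def phi10 (a q w : ℂ) : ℂ := ∑' n : ℕ, qPoch a q n * w ^ n / qPoch q q n

section Phi10

variable {a q w : ℂ}

lemma exists_norm_phi10_term_le (a : ℂ) (hq : ‖q‖ < 1) :
    ∃ C, 0 ≤ C ∧ ∀ (w : ℂ) (n : ℕ), ‖qPoch a q n * w ^ n / qPoch q q n‖ ≤ C * ‖w‖ ^ n := by
  set c := Real.exp (-(‖q‖ / (1 - ‖q‖) / (1 - ‖q‖)))
  refine ⟨Real.exp (‖a‖ / (1 - ‖q‖)) / c, by positivity, fun w n => ?_⟩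
  have hc : c ≤ ‖qPoch q q n‖ := exp_neg_le_norm_qPoch hq hq n
  rw [norm_div, norm_mul, norm_pow, div_le_iff₀ ((Real.exp_pos _).trans_le hc)]
  calc ‖qPoch a q n‖ * ‖w‖ ^ n ≤ Real.exp (‖a‖ / (1 - ‖q‖)) * ‖w‖ ^ n := by
        gcongr; exact norm_qPoch_le a hq n
    _ = Real.exp (‖a‖ / (1 - ‖q‖)) / c * ‖w‖ ^ n * c := by
        rw [mul_right_comm, div_mul_cancel₀ _ (Real.exp_pos _).ne']
    _ ≤ Real.exp (‖a‖ / (1 - ‖q‖)) / c * ‖w‖ ^ n * ‖qPoch q q n‖ := by gcongr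

lemma summable_norm_phi10_term (a : ℂ) (hq : ‖q‖ < 1) (hw : ‖w‖ < 1) :
    Summable fun n : ℕ => ‖qPoch a q n * w ^ n / qPoch q q n‖ := by
  obtain ⟨C, -, hC⟩ := exists_norm_phi10_term_le a hq
  exact .of_nonneg_of_le (fun _ => norm_nonneg _) (hC w)
    ((summable_geometric_of_lt_one (norm_nonneg w) hw).mul_left C)

-- Termwise, this is `(a;q)_{n+1} (1 - q^{n+1}) / (q;q)_{n+1} = (a;q)_n (1 - a q^n) / (q;q)_n`.
lemma one_sub_mul_phi10 (hq : ‖q‖ < 1) (hw : ‖w‖ < 1) :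
    (1 - w) * phi10 a q w = (1 - a * w) * phi10 a q (q * w) := by
  have hqw : ‖q * w‖ < 1 := by
    rw [norm_mul]; exact (mul_le_of_le_one_left (norm_nonneg w) hq.le).trans_lt hw
  set f : ℕ → ℂ := fun n => qPoch a q n * w ^ n / qPoch q q n
  set g : ℕ → ℂ := fun n => qPoch a q n * (q * w) ^ n / qPoch q q n
  have hf : Summable f := (summable_norm_phi10_term a hq hw).of_norm
  have hg : Summable g := (summable_norm_phi10_term a hq hqw).of_norm
  have hshift : ∀ n, f (n + 1) - g (n + 1) = w * (f n - a * g n) := fun n => by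
    have hQ := qPoch_ne_zero hq.le hq n
    have hd := one_sub_mul_pow_ne_zero hq.le hq n
    simp only [f, g, qPoch_succ]
    rw [← sub_div, div_eq_iff (mul_ne_zero hQ hd)]
    field_simp
    ring
  have key : phi10 a q w - phi10 a q (q * w) = w * (phi10 a q w - a * phi10 a q (q * w)) := by
    rw [phi10, phi10, ← hf.tsum_sub hg, (hf.sub hg).tsum_eq_zero_add]
    simp only [hshift, tsum_mul_left, hf.tsum_sub (hg.mul_left a), tsum_mul_left]
    simp [f, g]
  linear_combination key

lemma phi10_mul_qPoch (hq : ‖q‖ < 1) (hw : ‖w‖ < 1) (n : ℕ) :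
    phi10 a q w * qPoch w q n = qPoch (a * w) q n * phi10 a q (w * q ^ n) := by
  induction n with
  | zero => simp
  | succ n ih =>
    have hwq := (norm_mul_pow_le w hq.le n).trans_lt hw
    have step := one_sub_mul_phi10 (a := a) hq hwq
    rw [show q * (w * q ^ n) = w * q ^ (n + 1) by ring] at step
    rw [qPoch_succ, qPoch_succ, ← mul_assoc, ih]
    linear_combination qPoch (a * w) q n * step

lemma tendsto_phi10_mul_pow (a : ℂ) (hq : ‖q‖ < 1) (hw : ‖w‖ < 1) :
    Tendsto (fun n => phi10 a q (w * q ^ n)) atTop (𝓝 1) := by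
  obtain ⟨C, hC0, hC⟩ := exists_norm_phi10_term_le a hq
  have hlim : ∑' k : ℕ, qPoch a q k * 0 ^ k / qPoch q q k = 1 := by
    rw [tsum_eq_single 0 fun k hk => by simp [zero_pow hk]]
    simp
  rw [← hlim]
  refine tendsto_tsum_of_dominated_convergence
    ((summable_geometric_of_lt_one (norm_nonneg w) hw).mul_left C) (fun k => ?_)
    (.of_forall fun n k => (hC _ k).trans ?_)
  · have h := (tendsto_pow_atTop_nhds_zero_of_norm_lt_one hq).const_mul w
    rw [mul_zero] at h
    exact ((h.pow k).const_mul _).div_const _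
  · gcongr
    exact norm_mul_pow_le w hq.le n

end Phi10

lemma phi10_ne_zero {a q w : ℂ} (hq : ‖q‖ < 1) (hw : ‖w‖ < 1) (haw : ‖a * w‖ < 1) :
    phi10 a q w ≠ 0 := by
  intro h
  have hzero : ∀ n, phi10 a q (w * q ^ n) = 0 := fun n => by
    have := phi10_mul_qPoch (a := a) hq hw n
    rw [h, zero_mul, eq_comm] at this
    exact (mul_eq_zero.1 this).resolve_left (qPoch_ne_zero hq.le haw n)
  have := tendsto_phi10_mul_pow a hq hw
  simp only [hzero] at this
  exact zero_ne_one (tendsto_nhds_unique tendsto_const_nhds this)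

/-- The basic hypergeometric series `₂φ₁(a, b; c; q, z)`. -/
noncomputable def phi21 (a b c q z : ℂ) : ℂ :=
  ∑' n : ℕ, qPoch a q n * qPoch b q n * z ^ n / (qPoch q q n * qPoch c q n)

/-- Heine's transformation, multiplied through by `₁φ₀(α; —; q, b)` so that no infinite products
appear. Since `(b;q)ₙ / (α b;q)ₙ · ₁φ₀(α; —; q, b) = ₁φ₀(α; —; q, b qⁿ)`, both sides are iterated
sums of one absolutely convergent double series. -/
theorem hasSum_heine {a b α q z : ℂ} (hq : ‖q‖ < 1) (hb : ‖b‖ < 1) (hαb : ‖α * b‖ < 1)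
    (hz : ‖z‖ < 1) :
    HasSum (fun m => qPoch α q m * b ^ m / qPoch q q m * phi10 a q (z * q ^ m))
      (phi21 a b (α * b) q z * phi10 α q b) := by
  set f : ℕ → ℂ := fun n => qPoch a q n * z ^ n / qPoch q q n
  set g : ℕ → ℂ := fun m => qPoch α q m * b ^ m / qPoch q q m
  set F : ℕ × ℕ → ℂ := fun p => g p.1 * f p.2 * q ^ (p.1 * p.2)
  have hF : Summable F := by
    refine .of_norm_bounded ((summable_norm_phi10_term α hq hb).mul_norm
      (summable_norm_phi10_term a hq hz)) fun p => ?_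
    rw [norm_mul, norm_mul (g p.1), norm_pow]
    exact mul_le_of_le_one_right (by positivity) (pow_le_one₀ (norm_nonneg q) hq.le)
  have hrow : ∀ m, HasSum (fun n => F (m, n)) (g m * phi10 a q (z * q ^ m)) := fun m => by
    have hz' := (norm_mul_pow_le z hq.le m).trans_lt hz
    refine ((summable_norm_phi10_term a hq hz').of_norm.hasSum.mul_left (g m)).congr_fun
      fun n => ?_
    simp only [F, f, mul_pow, pow_mul']
    ring
  have hcol : ∀ n, HasSum (fun m => F (m, n))
      (qPoch a q n * qPoch b q n * z ^ n / (qPoch q q n * qPoch (α * b) q n) * phi10 α q b) :=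
      fun n => by
    have hb' := (norm_mul_pow_le b hq.le n).trans_lt hb
    have hshift : phi10 α q (b * q ^ n) = qPoch b q n / qPoch (α * b) q n * phi10 α q b := by
      rw [div_mul_eq_mul_div, eq_div_iff (qPoch_ne_zero hq.le hαb n), mul_comm,
        ← phi10_mul_qPoch hq hb, mul_comm]
    rw [show _ * phi10 α q b = f n * phi10 α q (b * q ^ n) by rw [hshift]; ring]
    refine ((summable_norm_phi10_term α hq hb').of_norm.hasSum.mul_left (f n)).congr_fun
      fun m => ?_
    simp only [F, f, g, mul_pow, pow_mul]
    ring
  have h1 := hF.hasSum.prod_fiberwise hrow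
  have h2 := hF.prod_symm.hasSum.prod_fiberwise hcol
  convert h1 using 1
  rw [phi21, ← tsum_mul_right, h2.tsum_eq]
  exact (Equiv.prodComm ℕ ℕ).tsum_eq F

section Lambert

variable {a q : ℂ}

lemma qPoch_div_qPoch_mul_phi10 (hq : ‖q‖ < 1) (ha : ‖a‖ < 1) (m : ℕ) :
    qPoch a q m / qPoch q q m * phi10 a q (q * q ^ m)
      = (1 - a) / (1 - a * q ^ m) * phi10 a q q := by
  have hshift := phi10_mul_qPoch (a := a) hq hq m
  have hsucc : qPoch a q m * (1 - a * q ^ m) = (1 - a) * qPoch (a * q) q m := by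
    rw [← qPoch_succ, qPoch_succ']
  have h1 := qPoch_ne_zero hq.le hq m
  have h3 := one_sub_mul_pow_ne_zero hq.le ha m
  rw [div_mul_eq_mul_div, div_mul_eq_mul_div, div_eq_div_iff h1 h3]
  linear_combination phi10 a q (q * q ^ m) * hsucc - (1 - a) * hshift

lemma norm_mul_self_neg_lt_one (ha : ‖a‖ < 1) : ‖a * -a‖ < 1 := by
  rw [norm_mul, norm_neg]
  exact mul_lt_one_of_nonneg_of_lt_one_left (norm_nonneg a) ha ha.le

lemma hasSum_phi21_q (hq : ‖q‖ < 1) (ha : ‖a‖ < 1) :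
    HasSum (fun m => (1 - a) * phi10 a q q * ((-a) ^ m / (1 - a * q ^ m)))
      (phi21 a (-a) (-a ^ 2) q q * phi10 a q (-a)) := by
  have h := hasSum_heine (a := a) (α := a) hq (by rwa [norm_neg]) (norm_mul_self_neg_lt_one ha) hq
  rw [show a * -a = -a ^ 2 by ring] at h
  refine h.congr_fun fun m => ?_
  rw [show qPoch a q m * (-a) ^ m / qPoch q q m * phi10 a q (q * q ^ m)
      = (-a) ^ m * (qPoch a q m / qPoch q q m * phi10 a q (q * q ^ m)) by ring,
    qPoch_div_qPoch_mul_phi10 hq ha]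
  ring

lemma hasSum_phi21_q_sq (hq : ‖q‖ < 1) (ha : ‖a‖ < 1) :
    HasSum (fun m => (1 - a) * phi10 a q q *
        ((-a) ^ m / (1 - a * q ^ m) * ((1 - q ^ (m + 1)) / (1 - a * q ^ (m + 1)))))
      (phi21 a (-a) (-a ^ 2) q (q ^ 2) * phi10 a q (-a)) := by
  have hq2 : ‖q ^ 2‖ < 1 := by rw [norm_pow]; exact pow_lt_one₀ (norm_nonneg q) hq two_ne_zero
  have h := hasSum_heine (a := a) (α := a) hq (by rwa [norm_neg]) (norm_mul_self_neg_lt_one ha) hq2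
  rw [show a * -a = -a ^ 2 by ring] at h
  refine h.congr_fun fun m => ?_
  have hm := qPoch_div_qPoch_mul_phi10 hq ha (m + 1)
  rw [qPoch_succ, qPoch_succ] at hm
  have h1 := qPoch_ne_zero hq.le hq m
  have h2 := one_sub_mul_pow_ne_zero hq.le hq m
  have h3 := one_sub_mul_pow_ne_zero hq.le ha m
  have hm' : qPoch a q m / qPoch q q m * phi10 a q (q * q ^ (m + 1))
      = (1 - a) / (1 - a * q ^ (m + 1)) * phi10 a q q
        * ((1 - q ^ (m + 1)) / (1 - a * q ^ m)) := by
    rw [← hm, pow_succ']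
    generalize qPoch q q m = Q at h1 ⊢
    generalize 1 - q * q ^ m = d at h2 ⊢
    generalize 1 - a * q ^ m = d' at h3 ⊢
    field_simp
  rw [show q ^ 2 * q ^ m = q * q ^ (m + 1) by ring,
    show qPoch a q m * (-a) ^ m / qPoch q q m * phi10 a q (q * q ^ (m + 1))
      = (-a) ^ m * (qPoch a q m / qPoch q q m * phi10 a q (q * q ^ (m + 1))) by ring, hm']
  ring

lemma summable_norm_lambert (hq : ‖q‖ ≤ 1) (ha : ‖a‖ < 1) :
    Summable fun m : ℕ => ‖(-a) ^ m / (1 - a * q ^ m)‖ := by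
  refine .of_nonneg_of_le (fun _ => norm_nonneg _) (fun m => ?_)
    ((summable_geometric_of_lt_one (norm_nonneg a) ha).div_const (1 - ‖a‖))
  rw [norm_div, norm_pow, norm_neg]
  refine div_le_div_of_nonneg_left (by positivity) (by linarith) ?_
  have := norm_sub_norm_le (1 : ℂ) (a * q ^ m)
  rw [norm_one] at this
  linarith [norm_mul_pow_le a hq m]

-- After clearing denominators the difference of the two sides is `(L q + a²) (1 + x - a x - q x)`.
lemma lambert_telescope {L : ℂ} (hL : L * q = -a ^ 2) {m : ℕ} (h0 : 1 - a * q ^ m ≠ 0)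
    (h1 : 1 - a * q ^ (m + 1) ≠ 0) :
    (1 + L) * ((-a) ^ m / (1 - a * q ^ m))
      - L * (1 - q) * ((-a) ^ m / (1 - a * q ^ m) * ((1 - q ^ (m + 1)) / (1 - a * q ^ (m + 1))))
      = (1 - a) * ((-a) ^ m / (1 - a * q ^ m) - (-a) ^ (m + 1) / (1 - a * q ^ (m + 1))) := by
  rw [pow_succ' q] at h1 ⊢
  rw [pow_succ' (-a)]
  generalize (-a) ^ m = s
  generalize q ^ m = x at h0 h1 ⊢
  generalize hd0 : 1 - a * x = d0 at h0 ⊢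
  generalize hd1 : 1 - a * (q * x) = d1 at h1 ⊢
  field_simp
  subst hd0 hd1
  linear_combination (s * (1 + x - a * x - q * x)) * hL

end Lambert

lemma hasSum_sub_succ {G : Type*} [AddCommGroup G] [TopologicalSpace G] [IsTopologicalAddGroup G]
    [T2Space G] {f : ℕ → G} (hf : Summable f) : HasSum (fun n => f n - f (n + 1)) (f 0) := by
  have h := hf.hasSum.sub ((summable_nat_add_iff 1).2 hf).hasSum
  rwa [hf.tsum_eq_zero_add, add_sub_cancel_right] at h

theorem phi21_eq_mul_tsum_lambert {a q L : ℂ} (hq : ‖q‖ < 1) (ha : ‖a‖ < 1)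
    (hL : L * q = -a ^ 2) :
    phi21 a (-a) (-a ^ 2) q q
      = ((1 + L) * phi21 a (-a) (-a ^ 2) q q - L * (1 - q) * phi21 a (-a) (-a ^ 2) q (q ^ 2))
        * ∑' m : ℕ, (-a) ^ m / (1 - a * q ^ m) := by
  set t : ℕ → ℂ := fun m => (-a) ^ m / (1 - a * q ^ m)
  set D := (1 + L) * phi21 a (-a) (-a ^ 2) q q - L * (1 - q) * phi21 a (-a) (-a ^ 2) q (q ^ 2)
  set c := (1 - a) * phi10 a q q
  have hA := hasSum_phi21_q hq ha
  have hD : HasSum (fun m => c * ((1 - a) * (t m - t (m + 1)))) (D * phi10 a q (-a)) := by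
    rw [show D * phi10 a q (-a) = (1 + L) * (phi21 a (-a) (-a ^ 2) q q * phi10 a q (-a))
      - L * (1 - q) * (phi21 a (-a) (-a ^ 2) q (q ^ 2) * phi10 a q (-a)) by ring]
    refine ((hA.mul_left (1 + L)).sub
      ((hasSum_phi21_q_sq hq ha).mul_left (L * (1 - q)))).congr_fun fun m => ?_
    rw [← lambert_telescope hL (one_sub_mul_pow_ne_zero hq.le ha m)
      (one_sub_mul_pow_ne_zero hq.le ha (m + 1))]
    ring
  have hDc : D * phi10 a q (-a) = c := by
    have ht : Summable t := (summable_norm_lambert hq.le ha).of_norm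
    rw [hD.unique (((hasSum_sub_succ ht).mul_left (1 - a)).mul_left c)]
    have ha1 : 1 - a ≠ 0 := by simpa using one_sub_mul_pow_ne_zero hq.le ha 0
    simp [t, ha1]
  refine mul_right_cancel₀ (phi10_ne_zero hq (by rwa [norm_neg]) (norm_mul_self_neg_lt_one ha)) ?_
  calc phi21 a (-a) (-a ^ 2) q q * phi10 a q (-a) = c * ∑' m, t m := by
        rw [← hA.tsum_eq, tsum_mul_left]
    _ = D * (∑' m, t m) * phi10 a q (-a) := by rw [← hDc]; ring

lemma psi_eq_phi21 {q lam a : ℂ} (h : a ^ 2 = -(lam ^ 2 * q)) (x : ℂ) :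
    psi q lam x = phi21 a (-a) (-a ^ 2) q x := by
  rw [psi, phi21, ← h, show lam ^ 2 * q = -a ^ 2 by rw [h, neg_neg]]
  simp only [qPoch_sq_sq]

theorem closedForm_qSecant_general (q lam μ : ℂ) (hq : ‖q‖ < 1)
    (hlam1 : ‖lam‖ < 1)
    (hlam2 : 1 + lam ^ 2 ≠ 0) (hμ : μ ^ 2 = q)
    (hpsi : psi q lam q ≠ 0)
    (hne : (1 + lam ^ 2) * psi q lam q ≠ lam ^ 2 * (1 - q) * psi q lam (q ^ 2)) :
    (Summable fun k : ℕ => ‖(-(I * lam * μ)) ^ k / (1 - I * lam * μ * q ^ k)‖) ∧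
    1 / (1 - lam ^ 2 * (1 - q) * psi q lam (q ^ 2) / ((1 + lam ^ 2) * psi q lam q))
      = (1 + lam ^ 2) * ∑' k : ℕ, (-(I * lam * μ)) ^ k / (1 - I * lam * μ * q ^ k) := by
  set a := I * lam * μ
  have ha2 : a ^ 2 = -(lam ^ 2 * q) := by
    rw [mul_pow, mul_pow, I_sq, hμ]; ring
  have ha : ‖a‖ < 1 := by
    have hμ1 : ‖μ‖ < 1 := by
      rw [← sq_lt_one_iff₀ (norm_nonneg μ), ← norm_pow, hμ]; exact hq
    rw [norm_mul, norm_mul, norm_I, one_mul]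
    exact mul_lt_one_of_nonneg_of_lt_one_left (norm_nonneg lam) hlam1 hμ1.le
  refine ⟨summable_norm_lambert hq.le ha, ?_⟩
  have key := phi21_eq_mul_tsum_lambert hq ha (L := lam ^ 2) (by rw [ha2, neg_neg])
  simp only [psi_eq_phi21 ha2] at hpsi hne ⊢
  rw [one_sub_div (mul_ne_zero hlam2 hpsi), one_div_div, div_eq_iff (sub_ne_zero.2 hne)]
  linear_combination (1 + lam ^ 2) * key

theorem closedForm_qSecant (q lam μ : ℂ) (hq : ‖q‖ < 1)
    (hlam0 : 0 < ‖lam‖) (hlam1 : ‖lam‖ < 1)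
    (hlam2 : 1 + lam ^ 2 ≠ 0) (hμ : μ ^ 2 = q)
    (hpsi : psi q lam q ≠ 0)
    (hne : (1 + lam ^ 2) * psi q lam q ≠ lam ^ 2 * (1 - q) * psi q lam (q ^ 2)) :
    (Summable fun k : ℕ => ‖(-(I * lam * μ)) ^ k / (1 - I * lam * μ * q ^ k)‖) ∧
    1 / (1 - lam ^ 2 * (1 - q) * psi q lam (q ^ 2) / ((1 + lam ^ 2) * psi q lam q))
      = (1 + lam ^ 2) * ∑' k : ℕ, (-(I * lam * μ)) ^ k / (1 - I * lam * μ * q ^ k) :=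
  closedForm_qSecant_general q lam μ hq hlam1 hlam2 hμ hpsi hne
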